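/- arXiv:2009.12871 — 4 statements merged into one kernel-verified Lean document; each statement's English description precedes it below -/
import Mathlib

section
/- For any reals k>l>0, any θ≥0, and any nondecreasing nonnegative function f with f(k)>0, it holds that (k f(k)+k f(k)θ)/(k f(k)+[(k-l)f(k)+l f(l)]θ) ≤ ((k-l)f(k)+k f(k)θ)/((k-l)f(k)+[(k-l)f(k)+l f(l)]θ). (That is, the parallel-link bound quantity η_θ is at most the general bound quantity γ_θ pointwise.) -/
theorem antitoneOn_add_div_add {c e : ℝ} (hec : e ≤ c) :
    AntitoneOn (fun x => (x + c) / (x + e)) (Set.Ioi (-e)) := by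
  intro x hx y hy hxy
  have hx : 0 < x + e := by simp only [Set.mem_Ioi] at hx; linarith
  have hy : 0 < y + e := by simp only [Set.mem_Ioi] at hy; linarith
  rw [div_le_div_iff₀ hy hx]
  nlinarith [mul_nonneg (sub_nonneg.2 hec) (sub_nonneg.2 hxy)]

theorem stmt3 (k l θ : ℝ) (f : ℝ → ℝ) (hl : 0 < l) (hkl : l < k) (hθ : 0 ≤ θ)
    (hmono : MonotoneOn f (Set.Ici 0)) (hnonneg : ∀ x, 0 ≤ x → 0 ≤ f x)
    (hfk : 0 < f k) :
    (k * f k + k * f k * θ) / (k * f k + ((k - l) * f k + l * f l) * θ) ≤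
    ((k - l) * f k + k * f k * θ) / ((k - l) * f k + ((k - l) * f k + l * f l) * θ) := by
  have hfl : f l ≤ f k := hmono (Set.mem_Ici.2 hl.le) (Set.mem_Ici.2 (hl.trans hkl).le) hkl.le
  have hB_nonneg : 0 ≤ (k - l) * f k + l * f l :=
    add_nonneg (mul_nonneg (by linarith) hfk.le) (mul_nonneg hl.le (hnonneg l hl.le))
  have hB_le : (k - l) * f k + l * f l ≤ k * f k := by nlinarith
  have hpos : 0 < (k - l) * f k := mul_pos (by linarith) hfk
  -- Both sides are `(x + k f(k) θ) / (x + Bθ)`, `B = (k - l) f(k) + l f(l)`, at `x = k f(k)` and `x = (k - l) f(k)`.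
  refine antitoneOn_add_div_add (mul_le_mul_of_nonneg_right hB_le hθ) ?_ ?_ (by nlinarith) <;>
    simp only [Set.mem_Ioi] <;> nlinarith [mul_nonneg hB_nonneg hθ]
end

section
/- Let p>q≥1 be integers and set x̂ = r/(r-1) where r = ((p+1)^{p+1} q^q / ((q+1)^{q+1} p^p))^{1/(p-q)}. Then r>1, x̂∈(q+1, p+1), and q^q x̂^{q+1}/((q+1)^{q+1}(x̂-1)^q) = p^p x̂^{p+1}/((p+1)^{p+1}(x̂-1)^p). -/
/-!
Strict AM-GM for `n` copies of `x` and one copy of `n` gives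
`(n + 1)^(n + 1) x^n < (x + 1)^(n + 1) n^n` for `x ≠ n`. Taking `(n, x) = (q, p)` and
`(n, x) = (p, q)` squeezes `r^(p - q)` between `((p + 1)/p)^(p - q)` and `((q + 1)/q)^(p - q)`,
so `(p + 1)/p < r < (q + 1)/q`. The map `r ↦ r/(r - 1)` is a decreasing involution of `(1, ∞)`
sending `(k + 1)/k` to `k + 1`, which places `x̂` in `(q + 1, p + 1)`, and the equation, once
denominators are cleared, says `(x̂/(x̂ - 1))^(p - q) = r^(p - q)`.
-/

lemma pow_mul_lt_arith_mean_pow {a b : ℝ} (ha : 0 < a) (hb : 0 ≤ b) (hab : a ≠ b) {n : ℕ}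
    (hn : n ≠ 0) : a ^ n * b < ((n * a + b) / (n + 1)) ^ (n + 1) := by
  set m := (n * a + b) / (n + 1) with hm
  have hn' : (0 : ℝ) < n := by positivity
  have hm0 : 0 < m := by positivity
  have hb_eq : b = (n + 1) * m - n * a := by rw [hm]; field_simp; ring
  have hma : m ≠ a := fun h => hab (by rw [hb_eq, h]; ring)
  have bernoulli : 1 + n * (m / a - 1) ≤ (m / a) ^ n :=
    one_add_mul_sub_le_pow (by linarith [div_pos hm0 ha]) n
  have gap : b / m < 1 + n * (m / a - 1) := by
    have excess : (1 + n * (m / a - 1)) * m - b = n * (m - a) ^ 2 / a := by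
      rw [hb_eq]; field_simp; ring
    have : 0 < n * (m - a) ^ 2 / a := by
      have := sq_pos_of_ne_zero (sub_ne_zero.mpr hma); positivity
    rw [div_lt_iff₀ hm0]
    linarith
  have := gap.trans_le bernoulli
  rw [div_pow, div_lt_div_iff₀ hm0 (by positivity), ← pow_succ] at this
  linarith

lemma add_one_pow_mul_pow_lt {n : ℕ} (hn : n ≠ 0) {x : ℝ} (hx : 0 < x) (hxn : x ≠ n) :
    ((n : ℝ) + 1) ^ (n + 1) * x ^ n < (x + 1) ^ (n + 1) * (n : ℝ) ^ n := by
  have hn0 : (0 : ℝ) < n := by positivity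
  have amgm := pow_mul_lt_arith_mean_pow hx hn0.le hxn hn
  rw [show ((n : ℝ) * x + n) / (n + 1) = n * ((x + 1) / (n + 1)) by ring, mul_pow, div_pow,
    pow_succ (n : ℝ), mul_div_assoc', lt_div_iff₀ (by positivity)] at amgm
  nlinarith

lemma add_one_lt_div_sub_one_iff {k r : ℝ} (hk : 0 < k) (hr : 1 < r) :
    k + 1 < r / (r - 1) ↔ r < (k + 1) / k := by
  rw [lt_div_iff₀ (by linarith), lt_div_iff₀ hk]
  constructor <;> intro h <;> linarith

lemma div_sub_one_lt_add_one_iff {k r : ℝ} (hk : 0 < k) (hr : 1 < r) :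
    r / (r - 1) < k + 1 ↔ (k + 1) / k < r := by
  rw [div_lt_iff₀ (by linarith), div_lt_iff₀ hk]
  constructor <;> intro h <;> linarith

lemma div_sub_one_div_div_sub_one {r : ℝ} (hr : r ≠ 1) : r / (r - 1) / (r / (r - 1) - 1) = r := by
  have : r - 1 ≠ 0 := sub_ne_zero.mpr hr
  field_simp
  ring

section

variable {p q : ℕ}

lemma add_one_div_pow_lt_ratio (hq : q ≠ 0) (hpq : q < p) :
    (((p : ℝ) + 1) / p) ^ (p - q) <
      ((p : ℝ) + 1) ^ (p + 1) * (q : ℝ) ^ q / (((q : ℝ) + 1) ^ (q + 1) * (p : ℝ) ^ p) := by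
  obtain ⟨d, rfl⟩ := Nat.exists_eq_add_of_le hpq.le
  have key := add_one_pow_mul_pow_lt hq (x := q + d) (by positivity) (by norm_cast; omega)
  rw [Nat.add_sub_cancel_left, div_pow, div_lt_div_iff₀ (by positivity) (by positivity)]
  push_cast
  calc _ = ((q + d : ℝ) + 1) ^ d * (q + d) ^ d * ((q + 1) ^ (q + 1) * (q + d) ^ q) := by ring
    _ < ((q + d : ℝ) + 1) ^ d * (q + d) ^ d * ((q + d + 1) ^ (q + 1) * q ^ q) := by gcongr
    _ = _ := by ring

lemma ratio_lt_add_one_div_pow (hq : q ≠ 0) (hpq : q < p) :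
    ((p : ℝ) + 1) ^ (p + 1) * (q : ℝ) ^ q / (((q : ℝ) + 1) ^ (q + 1) * (p : ℝ) ^ p) <
      (((q : ℝ) + 1) / q) ^ (p - q) := by
  obtain ⟨d, rfl⟩ := Nat.exists_eq_add_of_le hpq.le
  have key := add_one_pow_mul_pow_lt (n := q + d) (x := q) (by omega) (by positivity)
    (by norm_cast; omega)
  rw [Nat.add_sub_cancel_left, div_pow, div_lt_div_iff₀ (by positivity) (by positivity)]
  push_cast at key ⊢
  calc _ = ((q + d : ℝ) + 1) ^ (q + d + 1) * q ^ (q + d) := by ring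
    _ < (q + 1) ^ (q + d + 1) * (q + d) ^ (q + d) := key
    _ = _ := by ring

lemma eq_of_div_sub_one_pow_eq_ratio (hp : p ≠ 0) (hpq : q ≤ p) {x : ℝ} (hx : x ≠ 1)
    (h : (x / (x - 1)) ^ (p - q) =
      ((p : ℝ) + 1) ^ (p + 1) * (q : ℝ) ^ q / (((q : ℝ) + 1) ^ (q + 1) * (p : ℝ) ^ p)) :
    (q : ℝ) ^ q * x ^ (q + 1) / (((q : ℝ) + 1) ^ (q + 1) * (x - 1) ^ q) =
      (p : ℝ) ^ p * x ^ (p + 1) / (((p : ℝ) + 1) ^ (p + 1) * (x - 1) ^ p) := by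
  obtain ⟨d, rfl⟩ := Nat.exists_eq_add_of_le hpq
  have hx1 : x - 1 ≠ 0 := sub_ne_zero.mpr hx
  have hp' : (q : ℝ) + d ≠ 0 := by exact_mod_cast hp
  rw [Nat.add_sub_cancel_left, div_pow, div_eq_div_iff (by positivity) (by positivity)] at h
  push_cast at h ⊢
  field_simp
  linear_combination (-x ^ (q + 1) * (x - 1) ^ q) * h

end

theorem stmt9 (p q : ℕ) (hq : 1 ≤ q) (hpq : q < p) (r x : ℝ)
    (hr : r = (((p : ℝ) + 1) ^ (p + 1) * (q : ℝ) ^ q /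
        (((q : ℝ) + 1) ^ (q + 1) * (p : ℝ) ^ p)) ^ ((1 : ℝ) / ((p : ℝ) - (q : ℝ))))
    (hx : x = r / (r - 1)) :
    1 < r ∧ (q : ℝ) + 1 < x ∧ x < (p : ℝ) + 1 ∧
    (q : ℝ) ^ q * x ^ (q + 1) / (((q : ℝ) + 1) ^ (q + 1) * (x - 1) ^ q) =
    (p : ℝ) ^ p * x ^ (p + 1) / (((p : ℝ) + 1) ^ (p + 1) * (x - 1) ^ p) := by
  have hq' : (0 : ℝ) < q := Nat.cast_pos.mpr hq
  have hp' : (0 : ℝ) < p := Nat.cast_pos.mpr (by omega)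
  have hd : p - q ≠ 0 := by omega
  have hr_pow : r ^ (p - q) = ((p : ℝ) + 1) ^ (p + 1) * (q : ℝ) ^ q /
      (((q : ℝ) + 1) ^ (q + 1) * (p : ℝ) ^ p) := by
    rw [hr, one_div, ← Nat.cast_sub hpq.le, Real.rpow_inv_natCast_pow (by positivity) hd]
  have hr0 : 0 ≤ r := by rw [hr]; positivity
  have hr_lower : ((p : ℝ) + 1) / p < r := by
    rw [← pow_lt_pow_iff_left₀ (by positivity) hr0 hd, hr_pow]
    exact add_one_div_pow_lt_ratio (by omega) hpq
  have hr_upper : r < ((q : ℝ) + 1) / q := by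
    rw [← pow_lt_pow_iff_left₀ hr0 (by positivity) hd, hr_pow]
    exact ratio_lt_add_one_div_pow (by omega) hpq
  have hr1 : 1 < r := ((one_lt_div hp').mpr (by linarith)).trans hr_lower
  have hx_lower : (q : ℝ) + 1 < x := by rwa [hx, add_one_lt_div_sub_one_iff hq' hr1]
  have hx_upper : x < (p : ℝ) + 1 := by rwa [hx, div_sub_one_lt_add_one_iff hp' hr1]
  refine ⟨hr1, hx_lower, hx_upper,
    eq_of_div_sub_one_pow_eq_ratio (by omega) hpq.le (by linarith) ?_⟩
  rw [hx, div_sub_one_div_div_sub_one hr1.ne', hr_pow]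
end

section
/- For any θ≥0 and integer p≥1, sup over t>1 of t^{p+1}(1+θ)/(t^{p+1}(1+θ)-t^pθ+θ) equals (1+θ)(p+1)^{(p+1)/p} / ((1+θ)(p+1)^{(p+1)/p} - θp). -/
/-!
Write `A = c ^ (p + 1)` with `c = (p + 1) ^ (1 / p)`, so that `c ^ p = p + 1`. After clearing
denominators, the ratio at `t` is at most its value at `c` exactly when
`θ (1 + θ) (A t ^ p - A - p t ^ (p + 1)) ≤ 0`, and `A t ^ p ≤ p t ^ (p + 1) + A` is Bernoulli's
inequality `(p + 1) v ≤ v ^ (p + 1) + p` at `v = c / t`, multiplied by `t ^ (p + 1)`.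
Equality holds at `t = c > 1`, so the supremum is attained there.
-/

namespace FreeFlowParallelLinks

noncomputable def ratio (θ : ℝ) (p : ℕ) (t : ℝ) : ℝ :=
  t ^ (p + 1) * (1 + θ) / (t ^ (p + 1) * (1 + θ) - t ^ p * θ + θ)

lemma add_one_mul_le_pow_succ_add {v : ℝ} (hv : -1 ≤ v) (p : ℕ) :
    ((p : ℝ) + 1) * v ≤ v ^ (p + 1) + p := by
  have h := one_add_mul_le_pow (a := v - 1) (by linarith) (p + 1)
  rw [add_sub_cancel] at h
  push_cast at h
  linarith

lemma pow_succ_mul_pow_le {c : ℝ} (hc : 0 < c) {p : ℕ} (hcp : c ^ p = p + 1) {t : ℝ}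
    (ht : 0 < t) : c ^ (p + 1) * t ^ p ≤ p * t ^ (p + 1) + c ^ (p + 1) := by
  have h := add_one_mul_le_pow_succ_add (v := c / t) (by linarith [div_pos hc ht]) p
  have h' := mul_le_mul_of_nonneg_right h (pow_pos ht (p + 1)).le
  calc c ^ (p + 1) * t ^ p = ((p : ℝ) + 1) * (c / t) * t ^ (p + 1) := by
        rw [← hcp, pow_succ, pow_succ]; field_simp
    _ ≤ ((c / t) ^ (p + 1) + p) * t ^ (p + 1) := h'
    _ = p * t ^ (p + 1) + c ^ (p + 1) := by rw [div_pow]; field_simp; ring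

lemma ratio_denom_pos {θ : ℝ} (hθ : 0 ≤ θ) (p : ℕ) {t : ℝ} (ht : 0 < t) :
    0 < t ^ (p + 1) * (1 + θ) - t ^ p * θ + θ := by
  have htp : 0 < t ^ (p + 1) := pow_pos ht _
  rcases le_total 1 t with h1 | h1
  · have : t ^ p ≤ t ^ (p + 1) := pow_le_pow_right₀ h1 p.le_succ
    nlinarith
  · have : t ^ p ≤ 1 := pow_le_one₀ ht.le h1
    nlinarith

lemma ratio_le_ratio_of_pow_eq {θ : ℝ} (hθ : 0 ≤ θ) {c : ℝ} (hc : 0 < c) {p : ℕ}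
    (hcp : c ^ p = p + 1) {t : ℝ} (ht : 0 < t) : ratio θ p t ≤ ratio θ p c := by
  have hkey := pow_succ_mul_pow_le hc hcp ht
  rw [pow_succ c p, hcp] at hkey
  unfold ratio
  rw [div_le_div_iff₀ (ratio_denom_pos hθ p ht) (ratio_denom_pos hθ p hc), hcp, pow_succ c p, hcp]
  nlinarith [mul_nonneg (mul_nonneg (by linarith : (0 : ℝ) ≤ 1 + θ) hθ)
    (sub_nonneg.2 hkey)]

lemma ratio_of_pow_eq (θ : ℝ) {c : ℝ} {p : ℕ} (hcp : c ^ p = p + 1) :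
    ratio θ p c = (1 + θ) * c ^ (p + 1) / ((1 + θ) * c ^ (p + 1) - θ * p) := by
  unfold ratio
  rw [hcp]
  congr 1 <;> ring

lemma isGreatest_ratio_of_pow_eq {θ : ℝ} (hθ : 0 ≤ θ) {c : ℝ} (hc : 1 < c) {p : ℕ}
    (hcp : c ^ p = p + 1) :
    IsGreatest {y | ∃ t : ℝ, 1 < t ∧ y = ratio θ p t} (ratio θ p c) :=
  ⟨⟨c, hc, rfl⟩, by
    rintro y ⟨t, ht, rfl⟩
    exact ratio_le_ratio_of_pow_eq hθ (by linarith) hcp (by linarith)⟩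

lemma rpow_one_div_pow {x : ℝ} (hx : 0 ≤ x) (a : ℝ) (k : ℕ) :
    (x ^ (1 / a)) ^ k = x ^ ((k : ℝ) / a) := by
  rw [← Real.rpow_natCast, ← Real.rpow_mul hx, one_div_mul_eq_div]

end FreeFlowParallelLinks

open FreeFlowParallelLinks in
theorem stmt11 (θ : ℝ) (hθ : 0 ≤ θ) (p : ℕ) (hp : 1 ≤ p) :
    sSup {y : ℝ | ∃ t : ℝ, 1 < t ∧
        y = t ^ (p + 1) * (1 + θ) / (t ^ (p + 1) * (1 + θ) - t ^ p * θ + θ)} =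
      (1 + θ) * ((p : ℝ) + 1) ^ (((p : ℝ) + 1) / (p : ℝ)) /
        ((1 + θ) * ((p : ℝ) + 1) ^ (((p : ℝ) + 1) / (p : ℝ)) - θ * p) := by
  have hp0 : p ≠ 0 := Nat.one_le_iff_ne_zero.mp hp
  set c : ℝ := ((p : ℝ) + 1) ^ ((1 : ℝ) / p)
  have hcp : c ^ p = p + 1 := by
    rw [rpow_one_div_pow (by positivity), div_self (by exact_mod_cast hp0),
      Real.rpow_one]
  have hcp1 : c ^ (p + 1) = ((p : ℝ) + 1) ^ (((p : ℝ) + 1) / p) := by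
    rw [rpow_one_div_pow (by positivity)]
    push_cast
    rfl
  have hc : 1 < c := Real.one_lt_rpow (by simp [Nat.pos_of_ne_zero hp0]) (by positivity)
  rw [← hcp1, ← ratio_of_pow_eq θ hcp]
  exact (isGreatest_ratio_of_pow_eq hθ hc hcp).csSup_eq
end

section
/- Suppose for a class G of nonnegative nondecreasing functions we have sup over l>0, g∈G of g(y·l)/g(l) = ∞ for some y>1 (with g(l)>0). Then for every z>1, sup over t>1, l>0, g∈G with t+z(1-t)>0 of (t+z(1-t))·g(t·l)/g(l) = ∞. (Unbounded growth ratio at scale y forces γ_{G,>}(z)=∞ for all z.) -/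
/-!
Fix `t ∈ (1, z/(z-1))`, so that `c = t + z(1-t)` is positive, and `n` with `y ≤ tⁿ`. By
monotonicity `g(y l)/g(l) ≤ g(tⁿ l)/g(l)`, which telescopes into `n` ratios
`g(t^{j+1} l)/g(t^j l)`; if the former exceeds `Kⁿ`, one of the latter exceeds `K`. Hence the
ratios at scale `t` are unbounded as well, and so are their multiples by `c`.
-/

open Set

lemma exists_one_lt_and_pos_add_mul_one_sub {z : ℝ} (hz : 1 < z) :
    ∃ t : ℝ, 1 < t ∧ 0 < t + z * (1 - t) := by
  have hz0 : 0 < z := by linarith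
  refine ⟨1 + 1 / (2 * z), lt_add_of_pos_right 1 (by positivity), ?_⟩
  have hc : 1 + 1 / (2 * z) + z * (1 - (1 + 1 / (2 * z))) = 1 / 2 + 1 / (2 * z) := by
    field_simp; ring
  rw [hc]
  positivity

lemma exists_lt_ratio_of_pow_lt_ratio {g : ℝ → ℝ} (hmono : MonotoneOn g (Ioi 0))
    (hpos : ∀ x > 0, 0 < g x) {t y l K : ℝ} {n : ℕ} (ht : 1 < t) (hy : 0 < y) (hyt : y ≤ t ^ n)
    (hl : 0 < l) (hK : 0 ≤ K) (h : K ^ n < g (y * l) / g l) :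
    ∃ l' > 0, K < g (t * l') / g l' := by
  set a : ℕ → ℝ := fun j => g (t ^ j * l)
  have ht0 : 0 < t := by linarith
  have hgrowth : K ^ n * a 0 < a n := calc
    K ^ n * a 0 = K ^ n * g l := by simp [a]
    _ < g (y * l) := (lt_div_iff₀ (hpos l hl)).1 h
    _ ≤ a n := hmono (mem_Ioi.2 (by positivity)) (mem_Ioi.2 (by positivity))
      (mul_le_mul_of_nonneg_right hyt hl.le)
  obtain ⟨j, -, hj⟩ : ∃ j < n, K * a j < a (j + 1) := by
    by_contra! hcon
    exact (le_geom hK n hcon).not_gt hgrowth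
  refine ⟨t ^ j * l, by positivity, ?_⟩
  rw [lt_div_iff₀ (hpos _ (by positivity)), ← mul_assoc, ← pow_succ']
  exact hj

theorem stmt16 (G : Set (ℝ → ℝ))
    (hG : ∀ g ∈ G, MonotoneOn g (Set.Ioi 0) ∧ ∀ x > (0 : ℝ), 0 < g x)
    (y : ℝ) (hy : 1 < y)
    (hunb : ∀ M : ℝ, ∃ g ∈ G, ∃ l > (0 : ℝ), M < g (y * l) / g l) :
    ∀ z > (1 : ℝ), ∀ M : ℝ, ∃ g ∈ G, ∃ t l : ℝ,
      1 < t ∧ 0 < l ∧ 0 < t + z * (1 - t) ∧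
      M < (t + z * (1 - t)) * g (t * l) / g l := by
  intro z hz M
  obtain ⟨t, ht, hc⟩ := exists_one_lt_and_pos_add_mul_one_sub hz
  obtain ⟨n, hn⟩ := pow_unbounded_of_one_lt y ht
  set K := max 0 (M / (t + z * (1 - t)))
  obtain ⟨g, hg, l, hl, hgl⟩ := hunb (K ^ n)
  obtain ⟨hmono, hpos⟩ := hG g hg
  obtain ⟨l', hl', hK⟩ := exists_lt_ratio_of_pow_lt_ratio hmono hpos ht (by linarith) hn.le hl
    (le_max_left _ _) hgl
  refine ⟨g, hg, t, l', ht, hl', hc, ?_⟩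
  calc M ≤ (t + z * (1 - t)) * K := (div_le_iff₀' hc).1 (le_max_right _ _)
    _ < (t + z * (1 - t)) * (g (t * l') / g l') := mul_lt_mul_of_pos_left hK hc
    _ = (t + z * (1 - t)) * g (t * l') / g l' := mul_div_assoc' _ _ _
end
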